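/- arXiv:2005.04740 — 2 statements merged into one kernel-verified Lean document; each statement's English description precedes it below -/
import Mathlib

section
/- Let Γ > 1 be real and η ≤ w natural numbers. Then (1 - (1-1/Γ)^η)/(1 - (1-1/Γ)^w) ≥ η/w · (1-1/Γ)^{w-η}. Moreover, as Γ → ∞ with η, w fixed, (1 - (1-1/Γ)^η)/(1 - (1-1/Γ)^w) → η/w. -/
/-!
Write `x = 1 - 1/Γ ∈ [0, 1)`. Dividing numerator and denominator by `1 - x` turns the ratio into
`(∑_{i<η} x^i) / (∑_{i<w} x^i)`. Since `i ↦ x^i` is antitone, the average of its first `η` terms is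
at least the average of its first `w` terms (Chebyshev's sum inequality), which gives the bound even
without the factor `x^(w-η) ≤ 1`. The quotient of geometric sums is continuous at `x = 1`, where it
equals `η / w`, and `x → 1` as `Γ → ∞`.
-/

open Finset Filter Topology

theorem Antitone.mul_sum_range_le_mul_sum_range {α : Type*} [Semiring α] [LinearOrder α]
    [IsStrictOrderedRing α] [ExistsAddOfLE α] {f : ℕ → α} (hf : Antitone f) {m n : ℕ}
    (hmn : m ≤ n) : m * ∑ i ∈ range n, f i ≤ n * ∑ i ∈ range m, f i := by
  have hg : Antitone fun i : ℕ => if i < m then (1 : α) else 0 := by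
    intro i j hij
    dsimp only
    split_ifs <;> first | omega | norm_num
  have hfilter : (range n).filter (· < m) = range m := by
    ext i; simp only [mem_filter, mem_range]; omega
  have hcheb := ((hf.monovary hg).monovaryOn (range n)).sum_mul_sum_le_card_mul_sum
  simp only [mul_ite, mul_one, mul_zero, ← sum_filter, hfilter, sum_const, card_range,
    nsmul_eq_mul] at hcheb
  exact (Nat.cast_comm m _).trans_le hcheb

theorem one_sub_pow_div_one_sub_pow_eq {K : Type*} [Field K] {x : K} (hx : x ≠ 1) (m n : ℕ) :
    (1 - x ^ m) / (1 - x ^ n) = (∑ i ∈ range m, x ^ i) / ∑ i ∈ range n, x ^ i := by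
  rw [← mul_neg_geom_sum, ← mul_neg_geom_sum, mul_div_mul_left _ _ (sub_ne_zero.2 hx.symm)]

theorem div_le_one_sub_pow_div_one_sub_pow {x : ℝ} (hx₀ : 0 ≤ x) (hx₁ : x < 1) {m n : ℕ}
    (hmn : m ≤ n) : (m : ℝ) / n ≤ (1 - x ^ m) / (1 - x ^ n) := by
  rcases Nat.eq_zero_or_pos n with rfl | hn
  · simp
  have hsum : 0 < ∑ i ∈ range n, x ^ i := geom_sum_pos hx₀ hn.ne'
  rw [one_sub_pow_div_one_sub_pow_eq hx₁.ne, div_le_div_iff₀ (by positivity) hsum,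
    mul_comm _ (n : ℝ)]
  exact (pow_right_anti₀ hx₀ hx₁.le).mul_sum_range_le_mul_sum_range hmn

theorem tendsto_one_sub_pow_div_one_sub_pow (m n : ℕ) :
    Tendsto (fun x : ℝ => (1 - x ^ m) / (1 - x ^ n)) (𝓝[≠] 1) (𝓝 ((m : ℝ) / n)) := by
  rcases eq_or_ne n 0 with rfl | hn
  · simp
  have hcont : ContinuousAt (fun x : ℝ => (∑ i ∈ range m, x ^ i) / ∑ i ∈ range n, x ^ i) 1 := by
    fun_prop (disch := simpa)
  have hlim := hcont.tendsto.mono_left (nhdsWithin_le_nhds (s := {1}ᶜ))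
  simp only [one_pow, sum_const, card_range, nsmul_eq_mul, mul_one] at hlim
  refine hlim.congr' ?_
  filter_upwards [self_mem_nhdsWithin] with x hx
  exact (one_sub_pow_div_one_sub_pow_eq hx m n).symm

/-- Lower bound and asymptotics for the sub-window membership probability
`p_η = (1 - (1-1/Γ)^η)/(1 - (1-1/Γ)^w)`. -/
theorem stmt16 (η w : ℕ) (hηw : η ≤ w) :
    (∀ Γ : ℝ, 1 < Γ →
      (η:ℝ)/(w:ℝ) * (1 - 1/Γ)^(w - η)
        ≤ (1 - (1 - 1/Γ)^η) / (1 - (1 - 1/Γ)^w)) ∧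
    Filter.Tendsto (fun Γ : ℝ => (1 - (1 - 1/Γ)^η) / (1 - (1 - 1/Γ)^w))
      Filter.atTop (nhds ((η:ℝ)/(w:ℝ))) := by
  refine ⟨fun Γ hΓ => ?_, ?_⟩
  · have hx₀ : 0 ≤ 1 - 1 / Γ := sub_nonneg.2 ((div_le_one₀ (by linarith)).2 hΓ.le)
    have hx₁ : 1 - 1 / Γ < 1 := sub_lt_self _ (by positivity)
    calc (η : ℝ) / w * (1 - 1 / Γ) ^ (w - η) ≤ η / w :=
          mul_le_of_le_one_right (by positivity) (pow_le_one₀ hx₀ hx₁.le)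
      _ ≤ _ := div_le_one_sub_pow_div_one_sub_pow hx₀ hx₁ hηw
  · have hx : Tendsto (fun Γ : ℝ => 1 - 1 / Γ) atTop (𝓝[≠] 1) := by
      refine tendsto_nhdsWithin_iff.2 ⟨?_, ?_⟩
      · simpa using (tendsto_const_nhds (x := (1 : ℝ))).sub tendsto_inv_atTop_zero
      · filter_upwards [eventually_gt_atTop 0] with Γ hΓ
        simp [hΓ.ne']
    exact (tendsto_one_sub_pow_div_one_sub_pow η w).comp hx
end

section
/- For fixed window size w ≥ 1 and memory M > 0, the CSHF false positive probability 1 - (1 - 2^{-M/w})^w is strictly less than the SHF false positive probability 1 - (1 - √(w·2^{-M/w}))^w whenever w ≥ 2 and both quantities are well defined (i.e., w·2^{-M/w} ≤ 1). Equivalently, a CSHF of size M has the same false positive probability as an SHF of size 2M + w·log₂ w. -/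
/-! Per slot, an SHF fingerprint collides with probability `√(w x)` and a CSHF fingerprint
with probability `x = 2^(-M/w)`; since `w x ≤ 1` forces `x < w`, we get `x < √(w x)`, and the
false positive probability `1 - (1 - p)^w` is strictly increasing in `p ≤ 1`. Enlarging the
SHF memory to `2M + w log₂ w` turns `w x` into exactly `x²`. -/

open Real

noncomputable def cshfFalsePositive (w : ℕ) (M : ℝ) : ℝ :=
  1 - (1 - (2:ℝ) ^ (-(M / w))) ^ w

noncomputable def shfFalsePositive (w : ℕ) (M : ℝ) : ℝ :=
  1 - (1 - √((w:ℝ) * 2 ^ (-(M / w)))) ^ w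

lemma one_sub_one_sub_pow_lt_of_lt {a b : ℝ} {n : ℕ} (hab : a < b) (hb : b ≤ 1) (hn : n ≠ 0) :
    1 - (1 - a) ^ n < 1 - (1 - b) ^ n := by
  have := pow_lt_pow_left₀ (by linarith : 1 - b < 1 - a) (by linarith) hn
  linarith

lemma lt_sqrt_mul_self_of_lt {x c : ℝ} (hx : 0 < x) (hxc : x < c) : x < √(c * x) :=
  (lt_sqrt hx.le).mpr (by nlinarith)

lemma cshfFalsePositive_lt_shfFalsePositive {w : ℕ} {M : ℝ} (hw : 2 ≤ w)
    (hwd : (w:ℝ) * 2 ^ (-(M / w)) ≤ 1) : cshfFalsePositive w M < shfFalsePositive w M := by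
  set x : ℝ := (2:ℝ) ^ (-(M / w))
  have hx : 0 < x := rpow_pos_of_pos two_pos _
  have hw' : (2:ℝ) ≤ w := by exact_mod_cast hw
  have hxw : x < w := by nlinarith
  exact one_sub_one_sub_pow_lt_of_lt (lt_sqrt_mul_self_of_lt hx hxw) (sqrt_le_one.mpr hwd)
    (by omega)

lemma mul_two_rpow_neg_shf_memory {w : ℝ} (hw : 0 < w) (M : ℝ) :
    w * (2:ℝ) ^ (-((2 * M + w * logb 2 w) / w)) = ((2:ℝ) ^ (-(M / w))) ^ 2 := by
  have hexp : -((2 * M + w * logb 2 w) / w) = -(M / w) * 2 + -logb 2 w := by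
    field_simp; ring
  rw [hexp, rpow_add two_pos, rpow_neg zero_le_two, rpow_logb two_pos (by norm_num) hw,
    rpow_mul zero_le_two, rpow_two]
  field_simp

lemma cshfFalsePositive_eq_shfFalsePositive {w : ℕ} (hw : w ≠ 0) (M : ℝ) :
    cshfFalsePositive w M = shfFalsePositive w (2 * M + w * logb 2 w) := by
  rw [shfFalsePositive, mul_two_rpow_neg_shf_memory (by positivity) M,
    sqrt_sq (rpow_pos_of_pos two_pos _).le, cshfFalsePositive]

theorem stmt19_general (w : ℕ) (M : ℝ) (hw : 2 ≤ w)
    (hwd : (w:ℝ) * 2 ^ (-(M/(w:ℝ))) ≤ 1) :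
    (1 - (1 - (2:ℝ) ^ (-(M/(w:ℝ))))^w
        < 1 - (1 - Real.sqrt ((w:ℝ) * 2 ^ (-(M/(w:ℝ)))))^w) ∧
    (1 - (1 - (2:ℝ) ^ (-(M/(w:ℝ))))^w
        = 1 - (1 - Real.sqrt ((w:ℝ) *
            2 ^ (-((2*M + (w:ℝ) * Real.logb 2 (w:ℝ))/(w:ℝ)))))^w) :=
  ⟨cshfFalsePositive_lt_shfFalsePositive hw hwd,
    cshfFalsePositive_eq_shfFalsePositive (by omega) M⟩

/-- The CSHF false positive probability is strictly smaller than the SHF one for the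
same memory, and a CSHF of size `M` matches an SHF of size `2M + w·log₂ w`. -/
theorem stmt19 (w : ℕ) (M : ℝ) (hw : 2 ≤ w) (hM : 0 < M)
    (hwd : (w:ℝ) * 2 ^ (-(M/(w:ℝ))) ≤ 1) :
    (1 - (1 - (2:ℝ) ^ (-(M/(w:ℝ))))^w
        < 1 - (1 - Real.sqrt ((w:ℝ) * 2 ^ (-(M/(w:ℝ)))))^w) ∧
    (1 - (1 - (2:ℝ) ^ (-(M/(w:ℝ))))^w
        = 1 - (1 - Real.sqrt ((w:ℝ) *
            2 ^ (-((2*M + (w:ℝ) * Real.logb 2 (w:ℝ))/(w:ℝ)))))^w) :=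
  stmt19_general w M hw hwd
end
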